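/- Let f be a continuous map of M = [0,1] into itself. Then every minimal cycle of intervals for f is a proper cycle, i.e. the interiors of its constituent intervals f^i(J), 0 ≤ i ≤ n−1, are pairwise disjoint. -/

import Mathlib

open Set MeasureTheory Filter Topology

noncomputable section

/-- The unit interval `M = [0,1]`. -/
abbrev unitI : Set ℝ := Set.Icc 0 1

/-- Data of an interval map: the map `f`, the finite critical set `C`,
the one-sided critical orders `l s c` (`s = true` for the right side `c+`,
`s = false` for the left side `c-`), and the one-sided limit values
`fv s c = f(c±)`. -/
structure CritData where
  f : ℝ → ℝ
  C : Finset ℝ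
  l : Bool → ℝ → ℝ
  fv : Bool → ℝ → ℝ

namespace CritData

variable (D : CritData)

/-- One-sided neighbourhood of `c` of radius `ε`. -/
def sideIoo (s : Bool) (c ε : ℝ) : Set ℝ := if s then Ioo c (c + ε) else Ioo (c - ε) c

/-- The one-sided punctured half line at `c`. -/
def sideSet (s : Bool) (c : ℝ) : Set ℝ := if s then Ioi c else Iio c

/-- `f` is piecewise `C²` with critical set `C`: `C ⊆ M`, `f` maps `M` to `M`,
`f` is `C²` with non-vanishing derivative and injective (a diffeomorphism) on each
connected component of `M \ C`, has one-sided limits `fv s c` at each `c ∈ C`, and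
near each `c ∈ C` the map has one-sided critical order `l s c ∈ [1,∞)`. -/
def IsPiecewiseC2 : Prop :=
  (D.C : Set ℝ) ⊆ unitI ∧ MapsTo D.f unitI unitI ∧
  ContDiffOn ℝ 2 D.f (unitI \ (D.C : Set ℝ)) ∧
  (∀ x ∈ unitI \ (D.C : Set ℝ), deriv D.f x ≠ 0) ∧
  (∀ x ∈ unitI \ (D.C : Set ℝ),
    InjOn D.f (connectedComponentIn (unitI \ (D.C : Set ℝ)) x)) ∧
  ∀ c ∈ D.C, ∀ s : Bool,
    1 ≤ D.l s c ∧
    Tendsto D.f (𝓝[sideSet s c] c) (𝓝 (D.fv s c)) ∧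
    ∃ K₁ K₂ ε : ℝ, 0 < K₁ ∧ K₁ ≤ K₂ ∧ 0 < ε ∧
      ∀ x ∈ sideIoo s c ε,
        (K₁ * |x - c| ^ (D.l s c - 1) ≤ |deriv D.f x| ∧
          |deriv D.f x| ≤ K₂ * |x - c| ^ (D.l s c - 1)) ∧
        (K₁ * |x - c| ^ (D.l s c) ≤ |D.f x - D.fv s c| ∧
          |D.f x - D.fv s c| ≤ K₂ * |x - c| ^ (D.l s c)) ∧
        (K₁ * |x - c| ^ (D.l s c - 2) ≤ |deriv (deriv D.f) x| ∧
          |deriv (deriv D.f) x| ≤ K₂ * |x - c| ^ (D.l s c - 2))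

/-- Negative Schwarzian derivative: `|Df|^{-1/2}` is convex on each connected
component of `M \ C`. -/
def NegSchwarzian : Prop :=
  ∀ x ∈ unitI \ (D.C : Set ℝ),
    ConvexOn ℝ (connectedComponentIn (unitI \ (D.C : Set ℝ)) x)
      (fun y => |deriv D.f y| ^ (-(1 : ℝ) / 2))

/-- `f^n(c)` along the side-`s` orbit of the critical point `c` (for `n ≥ 1`):
`f^n(c) = f^[n-1](f(c±))`. -/
def fnC (s : Bool) (c : ℝ) (n : ℕ) : ℝ := D.f^[n - 1] (D.fv s c)

/-- `Df^n(f(c))`, the derivative of `f^n` at the (one-sided) critical value `f(c±)`. -/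
def DfnFc (s : Bool) (c : ℝ) (n : ℕ) : ℝ := deriv (D.f^[n]) (D.fv s c)

/-- A critical point of `C` closest to `y`. -/
def nearest (y : ℝ) : ℝ :=
  if h : D.C.Nonempty then (D.C.exists_min_image (fun c => |y - c|) h).choose else 0

/-- The critical order `l(c̃)` of the critical point `c̃` nearest to `y`, taken on the
side of `c̃` on which `y` lies. -/
def lNear (y : ℝ) : ℝ := D.l (decide (D.nearest y ≤ y)) (D.nearest y)

/-- The quantity `( |f^n(c)−c̃|^{l(c̃)} / (|f^n(c)−c̃|^{l(c)} |Df^n(f(c))|) )^e`,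
where `c̃` is the critical point closest to `f^n(c)`. -/
def sumTerm (s : Bool) (c : ℝ) (e : ℝ) (n : ℕ) : ℝ :=
  (|D.fnC s c n - D.nearest (D.fnC s c n)| ^ D.lNear (D.fnC s c n) /
    (|D.fnC s c n - D.nearest (D.fnC s c n)| ^ D.l s c * |D.DfnFc s c n|)) ^ e

/-- Summability condition (I). -/
def CondI : Prop :=
  ∀ c ∈ D.C, ∀ s : Bool,
    Summable fun n : ℕ => D.sumTerm s c (1 / (2 * D.l s c - 1)) (n + 1)

/-- Summability condition (II): `∑ₙ |Df^n(f(c))|^{-1/l(c)} < ∞`. -/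
def CondII : Prop :=
  ∀ c ∈ D.C, ∀ s : Bool,
    Summable fun n : ℕ => (1 / |D.DfnFc s c (n + 1)|) ^ (1 / D.l s c)

/-- `γ_n(c)`. -/
def gamma (s : Bool) (c : ℝ) (n : ℕ) : ℝ :=
  min (D.sumTerm s c (1 / (2 * D.l s c - 1)) n) (1 / 2)

/-- `d_n(c) = min_{1 ≤ i < n} (γ_i(c)/|Df^i(f(c))|)^{1/l(c)} |f^i(c)−c̃|^{l(c̃)/l(c)}`. -/
def dSeq (s : Bool) (c : ℝ) (n : ℕ) : ℝ :=
  sInf {t | ∃ i, 1 ≤ i ∧ i < n ∧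
    t = (D.gamma s c i / |D.DfnFc s c i|) ^ (1 / D.l s c) *
      |D.fnC s c i - D.nearest (D.fnC s c i)| ^ (D.lNear (D.fnC s c i) / D.l s c)}

end CritData

/-- `μ` is an acip for `f`: an `f`-invariant Borel probability measure on `M = [0,1]`,
absolutely continuous with respect to Lebesgue measure. -/
def IsAcip (f : ℝ → ℝ) (μ : Measure ℝ) : Prop :=
  IsProbabilityMeasure μ ∧ μ ≪ volume ∧ μ unitIᶜ = 0 ∧
  ∀ A : Set ℝ, MeasurableSet A → μ (f ⁻¹' A) = μ A

/-- `μ` is ergodic for `f`: every `f`-invariant Borel set has measure `0` or `1`. -/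
def IsErgodicFor (f : ℝ → ℝ) (μ : Measure ℝ) : Prop :=
  ∀ A : Set ℝ, MeasurableSet A → f ⁻¹' A = A → μ A = 0 ∨ μ A = 1

/-- `X = ⋃_{i<n} f^i(J)` is a cycle of intervals with generating interval `J`
(a nontrivial closed interval) and period `n`: `n ≥ 1` is least with `f^n(J) ⊆ J`. -/
def IsCycleWith (f : ℝ → ℝ) (J X : Set ℝ) (n : ℕ) : Prop :=
  (∃ a b : ℝ, a < b ∧ J = Icc a b) ∧ J ⊆ unitI ∧ 1 ≤ n ∧
  f^[n] '' J ⊆ J ∧ (∀ m, 1 ≤ m → m < n → ¬ f^[m] '' J ⊆ J) ∧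
  X = ⋃ i ∈ Finset.range n, f^[i] '' J

/-- `X` is a cycle of intervals for `f`. -/
def IsCycle (f : ℝ → ℝ) (X : Set ℝ) : Prop := ∃ J n, IsCycleWith f J X n

/-- A proper cycle: the interiors of the constituent intervals are pairwise disjoint. -/
def IsProperCycleWith (f : ℝ → ℝ) (J X : Set ℝ) (n : ℕ) : Prop :=
  IsCycleWith f J X n ∧
  ∀ i ∈ Finset.range n, ∀ j ∈ Finset.range n, i ≠ j →
    interior (f^[i] '' J) ∩ interior (f^[j] '' J) = ∅

/-- A minimal cycle: a cycle containing no strictly smaller cycle. -/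
def IsMinimalCycle (f : ℝ → ℝ) (X : Set ℝ) : Prop :=
  IsCycle f X ∧ ∀ Y, IsCycle f Y → Y ⊆ X → Y = X

/-- `φ` is Hölder continuous on `X`. -/
def HolderOnSet (φ : ℝ → ℝ) (X : Set ℝ) : Prop :=
  ∃ C > 0, ∃ a : ℝ, 0 < a ∧ a ≤ 1 ∧ ∀ x ∈ X, ∀ y ∈ X, |φ x - φ y| ≤ C * |x - y| ^ a


/-!
Call `T ⊆ {0, …, n-1}` a maximal overlap if the pieces `f^[t] '' J`, `t ∈ T`, have a nontrivial
common part and no larger index set has this property. That common part is a closed interval which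
`f^[n]` maps into itself. Minimality of `X` forces the orbit of such an interval to cover `X` and
forbids `f` to collapse it to a point. Hence `f^[q]` carries the common part for `T` into the one
for `T + q`, again a maximal overlap, and the maximal overlaps cover `X`. Shifting indices, the
number of maximal overlaps containing a given index does not depend on the index, so no piece can
contain another one with infinitely many points to spare.

If two pieces overlapped, every maximal overlap would have at least two elements, so the leftmost
point of `X` would lie in two pieces `Icc (sInf X) b` and `Icc (sInf X) b'`. One contains the
other, hence they are equal, contradicting the minimality of the period `n`.
-/

open Function

lemma exists_Icc_eq_of_isCompact {K : Set ℝ} (hK : IsCompact K) (hKo : K.OrdConnected)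
    (hnt : K.Nontrivial) : ∃ a b, a < b ∧ K = Icc a b := by
  have hKI := eq_Icc_of_connected_compact ⟨hnt.nonempty, hKo.isPreconnected⟩ hK
  refine ⟨sInf K, sSup K, lt_of_le_of_ne ?_ fun h => ?_, hKI⟩
  · obtain ⟨x, hx⟩ := hnt.nonempty
    rw [hKI] at hx
    exact hx.1.trans hx.2
  · rw [hKI, h, Icc_self] at hnt
    exact hnt.not_subsingleton subsingleton_singleton

lemma exists_Icc_eq_image_Icc {g : ℝ → ℝ} {a b : ℝ} (hg : ContinuousOn g (Icc a b))
    (hnt : (g '' Icc a b).Nontrivial) : ∃ c d, c < d ∧ g '' Icc a b = Icc c d :=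
  exists_Icc_eq_of_isCompact (isCompact_Icc.image_of_continuousOn hg)
    (isPreconnected_Icc.image g hg).ordConnected hnt

lemma exists_Icc_subset_diff_infinite {a b w : ℝ} (hab : a < b) (hw : w ∈ Icc a b) :
    ∃ c d, c < d ∧ Icc c d ⊆ Icc a b ∧ w ∈ Icc c d ∧ (Icc a b \ Icc c d).Infinite := by
  obtain ⟨m, ham, hmb⟩ := exists_between hab
  rcases le_or_gt w m with hwm | hwm
  · refine ⟨a, m, ham, Icc_subset_Icc_right hmb.le, ⟨hw.1, hwm⟩,
      (Ioc_infinite hmb).mono fun x hx => ⟨⟨ham.le.trans hx.1.le, hx.2⟩, fun h => ?_⟩⟩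
    exact (not_le.2 hx.1) h.2
  · refine ⟨m, b, hmb, Icc_subset_Icc_left ham.le, ⟨hwm.le, hw.2⟩,
      (Ico_infinite ham).mono fun x hx => ⟨⟨hx.1, hx.2.le.trans hmb.le⟩, fun h => ?_⟩⟩
    exact (not_le.2 hx.2) h.1

lemma le_of_Icc_diff_finite {u b c : ℝ} (hu : u ≤ c) (h : (Icc u b \ Icc u c).Finite) :
    b ≤ c := by
  by_contra! hcb
  refine (Ioc_infinite hcb).mono (fun x hx => ?_) h
  exact ⟨⟨hu.trans hx.1.le, hx.2⟩, fun hx' => not_le.2 hx.1 hx'.2⟩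

lemma image_iterate_subset_image_mod {α : Type*} {f : α → α} {J : Set α} {n : ℕ}
    (h : f^[n] '' J ⊆ J) (k : ℕ) : f^[k] '' J ⊆ f^[k % n] '' J := by
  have hJ : MapsTo f^[n * (k / n)] J J := by
    rw [iterate_mul]
    exact (mapsTo_iff_image_subset.2 h).iterate _
  calc f^[k] '' J = f^[k % n] '' (f^[n * (k / n)] '' J) := by
        rw [← image_comp, ← iterate_add, Nat.mod_add_div]
    _ ⊆ f^[k % n] '' J := image_mono hJ.image_subset

lemma image_iterate_biInter_subset {α : Type*} {f : α → α} {J : Set α} {n : ℕ}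
    (hper : f^[n] '' J ⊆ J) (T : Finset (Fin n)) (k : ℕ) :
    f^[k] '' ⋂ t ∈ T, f^[t] '' J ⊆ ⋂ t ∈ T, f^[(t + k) % n] '' J := by
  rintro _ ⟨x, hx, rfl⟩
  refine mem_iInter₂.2 fun t ht => ?_
  obtain ⟨y, hy, rfl⟩ := mem_iInter₂.1 hx t ht
  exact image_iterate_subset_image_mod hper _ ⟨y, hy, by rw [add_comm, iterate_add_apply]⟩

namespace IsCycleWith

variable {f : ℝ → ℝ} {J X : Set ℝ} {n : ℕ}

lemma nontrivial (h : IsCycleWith f J X n) : J.Nontrivial := by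
  obtain ⟨⟨a, b, hab, rfl⟩, -⟩ := h
  exact (Icc_infinite hab).nontrivial

lemma image_iterate_subset (h : IsCycleWith f J X n) (k : ℕ) : f^[k] '' J ⊆ X := by
  obtain ⟨-, -, hn, hper, -, rfl⟩ := h
  exact fun x hx => mem_biUnion (Finset.mem_range.2 (Nat.mod_lt k hn))
    (image_iterate_subset_image_mod hper k hx)

lemma mapsTo (h : IsCycleWith f J X n) : MapsTo f X X := by
  intro x hx
  rw [h.2.2.2.2.2] at hx
  obtain ⟨i, -, y, hy, rfl⟩ := mem_iUnion₂.1 hx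
  exact h.image_iterate_subset (i + 1) ⟨y, hy, iterate_succ_apply' f i y⟩

lemma subset_unitI (h : IsCycleWith f J X n) (hmaps : MapsTo f unitI unitI) : X ⊆ unitI := by
  obtain ⟨-, hJ, -, -, -, rfl⟩ := h
  exact iUnion₂_subset fun i _ => ((hmaps.iterate i).mono_left hJ).image_subset

lemma image_iterate_eq_Icc (h : IsCycleWith f J X n) (hcont : ContinuousOn f unitI)
    (hmaps : MapsTo f unitI unitI) (k : ℕ) :
    f^[k] '' J = Icc (sInf (f^[k] '' J)) (sSup (f^[k] '' J)) := by
  obtain ⟨⟨a, b, hab, rfl⟩, hJ, -⟩ := h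
  exact ContinuousOn.image_Icc hab.le ((hcont.iterate hmaps k).mono hJ)

lemma isCompact (h : IsCycleWith f J X n) (hcont : ContinuousOn f unitI)
    (hmaps : MapsTo f unitI unitI) : IsCompact X := by
  rw [h.2.2.2.2.2]
  exact (Finset.range n).isCompact_biUnion fun k _ => by
    rw [h.image_iterate_eq_Icc hcont hmaps k]
    exact isCompact_Icc

lemma not_image_iterate_subset (h : IsCycleWith f J X n) {i j : ℕ} (hij : i < j) (hj : j < n) :
    ¬ f^[i] '' J ⊆ f^[j] '' J := by
  intro hsub
  apply h.2.2.2.2.1 (n - j + i) (by omega) (by omega)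
  calc f^[n - j + i] '' J = f^[n - j] '' (f^[i] '' J) := by rw [iterate_add, image_comp]
    _ ⊆ f^[n - j] '' (f^[j] '' J) := image_mono hsub
    _ = f^[n] '' J := by rw [← image_comp, ← iterate_add, Nat.sub_add_cancel hj.le]
    _ ⊆ J := h.2.2.2.1

lemma eq_of_image_iterate_eq (h : IsCycleWith f J X n) {i j : ℕ} (hi : i < n) (hj : j < n)
    (heq : f^[i] '' J = f^[j] '' J) : i = j := by
  rcases lt_trichotomy i j with hij | hij | hij
  · exact (h.not_image_iterate_subset hij hj heq.subset).elim
  · exact hij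
  · exact (h.not_image_iterate_subset hij hi heq.symm.subset).elim

end IsCycleWith

def IsPeriodicIntervalIn (f : ℝ → ℝ) (X K : Set ℝ) (N : ℕ) : Prop :=
  (∃ a b, a < b ∧ K = Icc a b) ∧ K ⊆ X ∧ 1 ≤ N ∧ f^[N] '' K ⊆ K

namespace IsMinimalCycle

variable {f : ℝ → ℝ} {X K : Set ℝ} {N : ℕ}

lemma subset_biUnion_image_iterate (hmin : IsMinimalCycle f X) (hfX : MapsTo f X X)
    (hXu : X ⊆ unitI) (hK : IsPeriodicIntervalIn f X K N) :
    X ⊆ ⋃ q ∈ Finset.range N, f^[q] '' K := by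
  classical
  obtain ⟨hKI, hKX, hN, hKN⟩ := hK
  have hex : ∃ p, 1 ≤ p ∧ f^[p] '' K ⊆ K := ⟨N, hN, hKN⟩
  have hcyc : IsCycleWith f K (⋃ q ∈ Finset.range (Nat.find hex), f^[q] '' K) (Nat.find hex) :=
    ⟨hKI, hKX.trans hXu, (Nat.find_spec hex).1, (Nat.find_spec hex).2,
      fun m hm hmp hsub => Nat.find_min hex hmp ⟨hm, hsub⟩, rfl⟩
  rw [← hmin.2 _ ⟨K, _, hcyc⟩
    (iUnion₂_subset fun q _ => ((hfX.iterate q).mono_left hKX).image_subset)]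
  exact biUnion_mono (fun q hq => Finset.mem_range.2 ((Finset.mem_range.1 hq).trans_le
    (Nat.find_min' hex ⟨hN, hKN⟩))) fun _ _ => subset_rfl

lemma nontrivial_image (hmin : IsMinimalCycle f X) (hfX : MapsTo f X X) (hXu : X ⊆ unitI)
    (hK : IsPeriodicIntervalIn f X K N) : (f '' K).Nontrivial := by
  obtain ⟨⟨a, b, hab, rfl⟩, hKX, hN, hKN⟩ := hK
  by_contra hcol
  have hconst : ∀ q, ∀ x ∈ Icc a b, f^[q + 1] x = f^[q + 1] a := fun q x hx => by
    rw [iterate_succ_apply, iterate_succ_apply,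
      not_nontrivial_iff.1 hcol ⟨x, hx, rfl⟩ ⟨a, left_mem_Icc.2 hab.le, rfl⟩]
  -- `f^[N]` maps `Icc a b` to the point `f^[N] a`, so the half of `Icc a b` containing that point
  -- is periodic, while its orbit (one interval and finitely many points) misses the other half
  have hw : f^[N] a ∈ Icc a b := hKN ⟨a, left_mem_Icc.2 hab.le, rfl⟩
  obtain ⟨c, d, hcd, hsub, hwcd, hinf⟩ := exists_Icc_subset_diff_infinite hab hw
  have hper : f^[N] '' Icc c d ⊆ Icc c d := by
    rintro _ ⟨x, hx, rfl⟩
    obtain ⟨q, rfl⟩ := Nat.exists_eq_add_of_le' hN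
    rwa [hconst q x (hsub hx)]
  have hcover := subset_biUnion_image_iterate hmin hfX hXu
    ⟨⟨c, d, hcd, rfl⟩, hsub.trans hKX, hN, hper⟩
  refine hinf (((finite_lt_nat N).image fun q => f^[q] a).subset fun x hx => ?_)
  obtain ⟨q, hq, y, hy, rfl⟩ := mem_iUnion₂.1 (hcover (hKX hx.1))
  obtain _ | q := q
  · exact (hx.2 hy).elim
  · exact ⟨q + 1, Finset.mem_range.1 hq, (hconst q y (hsub hy)).symm⟩

lemma nontrivial_image_iterate (hcont : ContinuousOn f unitI) (hmin : IsMinimalCycle f X)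
    (hfX : MapsTo f X X) (hXu : X ⊆ unitI) (hK : IsPeriodicIntervalIn f X K N) (t : ℕ) :
    (f^[t] '' K).Nontrivial := by
  obtain ⟨hKI, hKX, hN, hKN⟩ := hK
  suffices ∃ a b, a < b ∧ f^[t] '' K = Icc a b by
    obtain ⟨a, b, hab, h⟩ := this
    exact h ▸ (Icc_infinite hab).nontrivial
  induction t with
  | zero => simpa using hKI
  | succ t ih =>
    obtain ⟨a, b, hab, hKt⟩ := ih
    have hKtX : Icc a b ⊆ X := hKt ▸ ((hfX.iterate t).mono_left hKX).image_subset
    have hKtN : f^[N] '' Icc a b ⊆ Icc a b := by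
      rw [← hKt, ← image_comp, ← iterate_add, add_comm, iterate_add, image_comp]
      exact image_mono hKN
    rw [iterate_succ', image_comp, hKt]
    exact exists_Icc_eq_image_Icc ((hcont.mono hXu).mono hKtX)
      (nontrivial_image hmin hfX hXu ⟨⟨a, b, hab, rfl⟩, hKtX, hN, hKtN⟩)

end IsMinimalCycle

section MaxOverlap

variable {α : Type*} {n : ℕ}

def IsMaxOverlap (A : Fin n → Set α) (T : Finset (Fin n)) : Prop :=
  (⋂ t ∈ T, A t).Nontrivial ∧
    ∀ T' : Finset (Fin n), (⋂ t ∈ T', A t).Nontrivial → T'.card ≤ T.card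

variable {A : Fin n → Set α} {T : Finset (Fin n)}

lemma exists_isMaxOverlap (i : Fin n) (hi : (A i).Nontrivial) : ∃ T, IsMaxOverlap A T := by
  obtain ⟨T, hT, hmax⟩ := exists_max_image {T : Finset (Fin n) | (⋂ t ∈ T, A t).Nontrivial}
    Finset.card (toFinite _) ⟨{i}, by simpa using hi⟩
  exact ⟨T, hT, hmax⟩

lemma IsMaxOverlap.nonempty (hT : IsMaxOverlap A T) {i : Fin n} (hi : (A i).Nontrivial) :
    T.Nonempty :=
  Finset.card_pos.1 (hT.2 {i} (by simpa using hi))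

lemma IsMaxOverlap.mem_of_nontrivial_inter (hT : IsMaxOverlap A T) {i : Fin n}
    (h : ((⋂ t ∈ T, A t) ∩ A i).Nontrivial) : i ∈ T := by
  classical
  by_contra hi
  have := hT.2 (insert i T) (by rwa [Finset.set_biInter_insert, inter_comm])
  rw [Finset.card_insert_of_notMem hi] at this
  omega

variable [NeZero n]

lemma IsMaxOverlap.ncard_mem_le
    (hshift : ∀ T (q : Fin n), IsMaxOverlap A T → IsMaxOverlap A (T.image (· + q)))
    (i j : Fin n) :
    {T | IsMaxOverlap A T ∧ i ∈ T}.ncard ≤ {T | IsMaxOverlap A T ∧ j ∈ T}.ncard := by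
  classical
  refine ncard_le_ncard_of_injOn (fun T => T.image (· + (j - i))) ?_
    (Finset.image_injective (add_left_injective _)).injOn (toFinite _)
  rintro T ⟨hT, hi⟩
  exact ⟨hshift T _ hT, Finset.mem_image.2 ⟨i, hi, add_sub_cancel i j⟩⟩

/-- A point of `A i \ A j` lying in a maximal overlap would give `A i` more maximal overlaps than
`A j`, but shifting indices shows that they have equally many. -/
lemma IsMaxOverlap.diff_finite_of_subset
    (hshift : ∀ T (q : Fin n), IsMaxOverlap A T → IsMaxOverlap A (T.image (· + q)))
    {i j : Fin n} (hcover : ∀ x ∈ A i, ∃ T, IsMaxOverlap A T ∧ x ∈ ⋂ t ∈ T, A t)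
    (hji : A j ⊆ A i) : (A i \ A j).Finite := by
  have hsub : {T | IsMaxOverlap A T ∧ j ∈ T} ⊆ {T | IsMaxOverlap A T ∧ i ∈ T} := by
    rintro T ⟨hT, hj⟩
    refine ⟨hT, hT.mem_of_nontrivial_inter ?_⟩
    have hTj : (⋂ t ∈ T, A t) ⊆ A j := fun x hx => mem_iInter₂.1 hx j hj
    rw [inter_eq_left.2 (hTj.trans hji)]
    exact hT.1
  have heq := eq_of_subset_of_ncard_le hsub (IsMaxOverlap.ncard_mem_le hshift i j)
  by_contra hinf
  obtain ⟨⟨T, hT⟩, hTinf⟩ :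
      ∃ T : {T // IsMaxOverlap A T}, ((⋂ t ∈ T.1, A t) ∩ (A i \ A j)).Infinite := by
    by_contra! hfin
    refine hinf ((finite_iUnion hfin).subset fun x hx => ?_)
    obtain ⟨T, hT, hxT⟩ := hcover x hx.1
    exact mem_iUnion.2 ⟨⟨T, hT⟩, hxT, hx⟩
  have hiT : i ∈ T :=
    hT.mem_of_nontrivial_inter (hTinf.mono (inter_subset_inter_right _ sdiff_subset)).nontrivial
  obtain ⟨x, hxT, -, hxj⟩ := hTinf.nonempty
  exact hxj (mem_iInter₂.1 hxT j (heq.symm.subset ⟨hT, hiT⟩).2)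

end MaxOverlap

namespace IsCycleWith

variable {f : ℝ → ℝ} {J X : Set ℝ} {n : ℕ}

lemma exists_Icc_eq_biInter (h : IsCycleWith f J X n) (hcont : ContinuousOn f unitI)
    (hmaps : MapsTo f unitI unitI) {T : Finset (Fin n)} (hTne : T.Nonempty)
    (hT : (⋂ t ∈ T, f^[t] '' J).Nontrivial) : ∃ a b, a < b ∧ ⋂ t ∈ T, f^[t] '' J = Icc a b := by
  have hIcc := h.image_iterate_eq_Icc hcont hmaps
  obtain ⟨t₀, ht₀⟩ := hTne
  refine exists_Icc_eq_of_isCompact (IsCompact.of_isClosed_subset ?_ ?_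
    (fun x hx => mem_iInter₂.1 hx t₀ ht₀)) (ordConnected_biInter fun t _ => ?_) hT
  · rw [hIcc]
    exact isCompact_Icc
  · exact isClosed_biInter fun t _ => by rw [hIcc]; exact isClosed_Icc
  · rw [hIcc]
    exact ordConnected_Icc

variable [NeZero n]

lemma isPeriodicIntervalIn_biInter (h : IsCycleWith f J X n) (hcont : ContinuousOn f unitI)
    (hmaps : MapsTo f unitI unitI) {T : Finset (Fin n)}
    (hT : IsMaxOverlap (fun k : Fin n => f^[k] '' J) T) :
    IsPeriodicIntervalIn f X (⋂ t ∈ T, f^[t] '' J) n := by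
  obtain ⟨t₀, ht₀⟩ := hT.nonempty (i := 0) (by simpa using h.nontrivial)
  refine ⟨h.exists_Icc_eq_biInter hcont hmaps ⟨t₀, ht₀⟩ hT.1,
    fun x hx => h.image_iterate_subset t₀ (mem_iInter₂.1 hx t₀ ht₀), h.2.2.1,
    (image_iterate_biInter_subset h.2.2.2.1 T n).trans_eq ?_⟩
  simp [Nat.mod_eq_of_lt]

lemma isMaxOverlap_image_add (h : IsCycleWith f J X n) (hcont : ContinuousOn f unitI)
    (hmaps : MapsTo f unitI unitI) (hmin : IsMinimalCycle f X) {T : Finset (Fin n)}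
    (hT : IsMaxOverlap (fun k : Fin n => f^[k] '' J) T) (q : Fin n) :
    IsMaxOverlap (fun k : Fin n => f^[k] '' J) (T.image (· + q)) := by
  have hnt := hmin.nontrivial_image_iterate hcont h.mapsTo (h.subset_unitI hmaps)
    (h.isPeriodicIntervalIn_biInter hcont hmaps hT) q
  refine ⟨hnt.mono ((image_iterate_biInter_subset h.2.2.2.1 T q).trans_eq ?_),
    fun T' hT' => (hT.2 T' hT').trans_eq
      (Finset.card_image_of_injective _ (add_left_injective q)).symm⟩
  rw [Finset.set_biInter_finset_image]
  simp only [Fin.val_add]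

lemma exists_isMaxOverlap_mem (h : IsCycleWith f J X n) (hcont : ContinuousOn f unitI)
    (hmaps : MapsTo f unitI unitI) (hmin : IsMinimalCycle f X) {x : ℝ} (hx : x ∈ X) :
    ∃ T, IsMaxOverlap (fun k : Fin n => f^[k] '' J) T ∧ x ∈ ⋂ t ∈ T, f^[t] '' J := by
  obtain ⟨T, hT⟩ := exists_isMaxOverlap (A := fun k : Fin n => f^[k] '' J) 0
    (by simpa using h.nontrivial)
  obtain ⟨q, hq, hxq⟩ := mem_iUnion₂.1 (hmin.subset_biUnion_image_iterate h.mapsTo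
    (h.subset_unitI hmaps) (h.isPeriodicIntervalIn_biInter hcont hmaps hT) hx)
  have hqn : q < n := Finset.mem_range.1 hq
  refine ⟨_, h.isMaxOverlap_image_add hcont hmaps hmin hT ⟨q, hqn⟩, ?_⟩
  rw [Finset.set_biInter_finset_image]
  simpa only [Fin.val_add] using image_iterate_biInter_subset h.2.2.2.1 T q hxq

lemma image_iterate_eq_of_sInf_mem (h : IsCycleWith f J X n) (hcont : ContinuousOn f unitI)
    (hmaps : MapsTo f unitI unitI) (hmin : IsMinimalCycle f X) {k l : Fin n}
    (hk : sInf X ∈ f^[k] '' J) (hl : sInf X ∈ f^[l] '' J) : f^[k] '' J = f^[l] '' J := by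
  wlog hle : sSup (f^[l] '' J) ≤ sSup (f^[k] '' J) generalizing k l
  · exact (this hl hk (le_of_not_ge hle)).symm
  have hbdd : BddBelow X := (h.isCompact hcont hmaps).bddBelow
  have hIcc : ∀ m : Fin n, sInf X ∈ f^[m] '' J →
      f^[m] '' J = Icc (sInf X) (sSup (f^[m] '' J)) := fun m hm => by
    have hinf : sInf (f^[m] '' J) = sInf X :=
      le_antisymm (csInf_le (hbdd.mono (h.image_iterate_subset m)) hm)
        (le_csInf ⟨_, hm⟩ fun y hy => csInf_le hbdd (h.image_iterate_subset m hy))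
    rw [← hinf]
    exact h.image_iterate_eq_Icc hcont hmaps m
  have hk' := hIcc k hk
  have hl' := hIcc l hl
  have hsub : f^[l] '' J ⊆ f^[k] '' J := by
    rw [hk', hl']
    exact Icc_subset_Icc_right hle
  have hfin := IsMaxOverlap.diff_finite_of_subset (A := fun m : Fin n => f^[m] '' J)
    (fun T q hT => h.isMaxOverlap_image_add hcont hmaps hmin hT q)
    (fun x hx => h.exists_isMaxOverlap_mem hcont hmaps hmin (h.image_iterate_subset k hx)) hsub
  have hu : sInf X ≤ sSup (f^[l] '' J) := (hl' ▸ hl).2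
  rw [hk', hl'] at hfin ⊢
  rw [le_antisymm (le_of_Icc_diff_finite hu hfin) hle]

end IsCycleWith

theorem statement14 (f : ℝ → ℝ) (hcont : ContinuousOn f unitI)
    (hmaps : MapsTo f unitI unitI)
    (J X : Set ℝ) (n : ℕ) (hcyc : IsCycleWith f J X n) (hmin : IsMinimalCycle f X) :
    ∀ i ∈ Finset.range n, ∀ j ∈ Finset.range n, i ≠ j →
      interior (f^[i] '' J) ∩ interior (f^[j] '' J) = ∅ := by
  intro i hi j hj hij
  rw [Finset.mem_range] at hi hj
  have : NeZero n := ⟨by have := hcyc.2.2.1; omega⟩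
  by_contra hov
  obtain ⟨x, hxi, hxj⟩ := nonempty_iff_ne_empty.2 hov
  have hpair : (⋂ t ∈ ({⟨i, hi⟩, ⟨j, hj⟩} : Finset (Fin n)), f^[t] '' J).Nontrivial := by
    simp only [Finset.set_biInter_insert, Finset.set_biInter_singleton]
    exact (infinite_of_mem_nhds x ((isOpen_interior.inter isOpen_interior).mem_nhds ⟨hxi, hxj⟩)
      ).nontrivial.mono (inter_subset_inter interior_subset interior_subset)
  have hXne : X.Nonempty :=
    hcyc.nontrivial.nonempty.mono (by simpa using hcyc.image_iterate_subset 0)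
  obtain ⟨T, hT, hu⟩ := hcyc.exists_isMaxOverlap_mem hcont hmaps hmin
    ((hcyc.isCompact hcont hmaps).sInf_mem hXne)
  obtain ⟨k, hk, l, hl, hkl⟩ := Finset.one_lt_card.1
    ((Finset.card_pair (Fin.ne_of_val_ne hij)).symm.trans_le (hT.2 _ hpair))
  exact hkl (Fin.ext (hcyc.eq_of_image_iterate_eq k.2 l.2 (hcyc.image_iterate_eq_of_sInf_mem
    hcont hmaps hmin (mem_iInter₂.1 hu k hk) (mem_iInter₂.1 hu l hl))))
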